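/- Let d ≥ 1 and let G be the graphical parallel connection of graphs G1=(V1,E1) and G2=(V2,E2) along an edge e, i.e., V1 ∩ V2 = {u,w}, E1 ∩ E2 = {uw} = {e}, and G = G1 ∪ G2. Suppose that r_d(Ei ∖ {e}) = r_d(Ei) for i = 1,2 (e is not a coloop of the rigidity matroid of Gi). Then E(G) = E1 ∪ E2 is a k-fold R_d-circuit if and only if there exist nonnegative integers k1, k2 such that Ei is a ki-fold R_d-circuit for i = 1,2 and k1 + k2 = k. -/
import Mathlib


open scoped BigOperators

/-- The row of the `d`-dimensional rigidity matrix of a realisation `p : V → ℝ^d`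
indexed by the (unordered) edge `e`. -/
noncomputable def rigRow (d : ℕ) {V : Type*} [DecidableEq V]
    (p : V → Fin d → ℝ) (e : Sym2 V) : V × Fin d → ℝ :=
  Sym2.lift
    ⟨fun u v wi =>
        (((if wi.1 = u then (1 : ℝ) else 0) - (if wi.1 = v then (1 : ℝ) else 0)) *
          (p u wi.2 - p v wi.2)),
      fun u v => by funext wi; ring⟩ e

/-- A realisation is generic if the coordinates of the points form an algebraically
independent set over `ℚ`. -/
def Generic (d : ℕ) {V : Type*} (p : V → Fin d → ℝ) : Prop :=
  AlgebraicIndependent ℚ fun vi : V × Fin d => p vi.1 vi.2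

/-- `rrk d p F` : the rank of the set of rows of the rigidity matrix of `(K_V, p)`
indexed by the edges in `F`.  For generic `p` this is the rank function `r_d` of
the generic `d`-dimensional rigidity matroid. -/
noncomputable def rrk (d : ℕ) {V : Type*} [Fintype V] [DecidableEq V]
    (p : V → Fin d → ℝ) (F : Set (Sym2 V)) : ℕ :=
  Module.finrank ℝ (Submodule.span ℝ (rigRow d p '' F))

/-- `D` is a `k`-fold circuit (with respect to the realisation `p`) :
`r (D \ {f}) = r D` for every `f ∈ D`, and `r D = |D| - k`. -/
def IsKFoldCircuit (d : ℕ) {V : Type*} [Fintype V] [DecidableEq V]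
    (p : V → Fin d → ℝ) (D : Finset (Sym2 V)) (k : ℕ) : Prop :=
  (∀ f ∈ D, rrk d p (↑D \ {f}) = rrk d p ↑D) ∧ rrk d p ↑D + k = D.card

/-- An `R_d`-circuit: `r C = |C| - 1` and `r (C \ {f}) = r C` for all `f ∈ C`. -/
def IsCircuit (d : ℕ) {V : Type*} [Fintype V] [DecidableEq V]
    (p : V → Fin d → ℝ) (C : Finset (Sym2 V)) : Prop :=
  IsKFoldCircuit d p C 1

/-- `A` is a part of the principal partition of the `k`-fold circuit `D`:
the parts are the sets `D \ B` where `B` runs over the `(k-1)`-fold circuits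
contained in `D`. -/
def IsPrincipalPart (d : ℕ) {V : Type*} [Fintype V] [DecidableEq V]
    (p : V → Fin d → ℝ) (D : Finset (Sym2 V)) (k : ℕ) (A : Finset (Sym2 V)) : Prop :=
  ∃ B ⊆ D, IsKFoldCircuit d p B (k - 1) ∧ A = D \ B

/-- Closure in the rigidity matroid: all edges of `K_V` whose addition to `F`
does not increase the rank. -/
def rcl (d : ℕ) {V : Type*} [Fintype V] [DecidableEq V]
    (p : V → Fin d → ℝ) (F : Set (Sym2 V)) : Set (Sym2 V) :=
  {e | ¬ e.IsDiag ∧ rrk d p (insert e F) = rrk d p F}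

/-- A `k`-fold circuit `D` with principal partition `A_1, …, A_ℓ` is balanced if
`r_d (⋂ i, cl_d (D \ A_i)) = ℓ - k`. -/
def IsBalanced (d : ℕ) {V : Type*} [Fintype V] [DecidableEq V]
    (p : V → Fin d → ℝ) (D : Finset (Sym2 V)) (k : ℕ) : Prop :=
  rrk d p (⋂ A ∈ {A | IsPrincipalPart d p D k A}, rcl d p ↑(D \ A)) + k =
    Set.ncard {A | IsPrincipalPart d p D k A}

/-- A vertex is monochromatic if all edges of `D` incident with it lie in a single
part of the principal partition (and technicolour otherwise). -/
def Monochromatic (d : ℕ) {V : Type*} [Fintype V] [DecidableEq V]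
    (p : V → Fin d → ℝ) (D : Finset (Sym2 V)) (k : ℕ) (w : V) : Prop :=
  ∃ A, IsPrincipalPart d p D k A ∧ ∀ e ∈ D, w ∈ e → e ∈ A

/-- The graph `(W, E)` is `R_d`-rigid: it is a complete graph on at most `d+1`
vertices, or `r_d(E) = d|W| - (d+1 choose 2)`. -/
def IsRigidOn (d : ℕ) {V : Type*} [Fintype V] [DecidableEq V]
    (p : V → Fin d → ℝ) (W : Finset V) (E : Finset (Sym2 V)) : Prop :=
  (W.card ≤ d + 1 ∧ ∀ u ∈ W, ∀ w ∈ W, u ≠ w → s(u, w) ∈ E) ∨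
    (rrk d p ↑E : ℤ) + ((d + 1).choose 2 : ℤ) = (d : ℤ) * (W.card : ℤ)

/-- The edge set of the cone of (the graph with edge set) `D` over a new vertex,
realised as `none : Option V`. -/
def coneEdges {V : Type*} [Fintype V] [DecidableEq V] (D : Finset (Sym2 V)) :
    Finset (Sym2 (Option V)) :=
  D.image (Sym2.map Option.some) ∪
    Finset.univ.image fun u : V => s((Option.some u : Option V), (none : Option V))

/-- The degree of the vertex `w` in the edge set `D`. -/
def degIn {V : Type*} [Fintype V] [DecidableEq V] (D : Finset (Sym2 V)) (w : V) : ℕ :=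
  (D.filter fun e => w ∈ e).card

/-- The set of vertices incident with an edge of `F`. -/
def esupp {V : Type*} [Fintype V] [DecidableEq V] (F : Finset (Sym2 V)) : Finset V :=
  Finset.univ.filter fun w => ∃ e ∈ F, w ∈ e


section AuxRigidity

set_option linter.unusedSectionVars false

variable (d : ℕ) {V : Type*} [Fintype V] [DecidableEq V] (p : V → Fin d → ℝ)

private lemma rigRow_mk (a b : V) (x : V) (j : Fin d) :
    rigRow d p s(a, b) (x, j) =
      ((if x = a then (1 : ℝ) else 0) - (if x = b then (1 : ℝ) else 0)) * (p a j - p b j) :=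
  rfl

private def rigT (W : Finset V) : Submodule ℝ (V × Fin d → ℝ) where
  carrier := {q | (∀ x, x ∉ W → ∀ j, q (x, j) = 0) ∧
    (∀ j, ∑ x, q (x, j) = 0) ∧
    (∀ j j', ∑ x, q (x, j) * p x j' = ∑ x, q (x, j') * p x j)}
  add_mem' := by
    rintro q r ⟨h1, h2, h3⟩ ⟨g1, g2, g3⟩
    refine ⟨fun x hx j => by simp [h1 x hx j, g1 x hx j], fun j => ?_, fun j j' => ?_⟩
    · simp only [Pi.add_apply, Finset.sum_add_distrib, h2 j, g2 j, add_zero]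
    · simp only [Pi.add_apply, add_mul, Finset.sum_add_distrib, h3 j j', g3 j j']
  zero_mem' := ⟨by simp, by simp, by simp⟩
  smul_mem' := by
    rintro c q ⟨h1, h2, h3⟩
    refine ⟨fun x hx j => by simp [h1 x hx j], fun j => ?_, fun j j' => ?_⟩
    · simp only [Pi.smul_apply, smul_eq_mul, ← Finset.mul_sum, h2 j, mul_zero]
    · simp only [Pi.smul_apply, smul_eq_mul, mul_assoc, ← Finset.mul_sum, h3 j j']

private lemma rigRow_mem_rigT (W : Finset V) (e : Sym2 V) (he : ∀ x ∈ e, x ∈ W) :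
    rigRow d p e ∈ rigT d p W := by
  induction e using Sym2.ind with
  | _ a b =>
    have ha : a ∈ W := he a (by simp)
    have hb : b ∈ W := he b (by simp)
    refine ⟨fun x hx j => ?_, fun j => ?_, fun j j' => ?_⟩
    · rw [rigRow_mk]
      have hxa : x ≠ a := fun h => hx (h ▸ ha)
      have hxb : x ≠ b := fun h => hx (h ▸ hb)
      simp [hxa, hxb]
    · simp only [rigRow_mk, sub_mul, ite_mul, one_mul, zero_mul,
        Finset.sum_sub_distrib, Finset.sum_ite_eq', Finset.mem_univ, if_true]
      ring
    · simp only [rigRow_mk, sub_mul, ite_mul, one_mul, zero_mul,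
        Finset.sum_sub_distrib, Finset.sum_ite_eq', Finset.mem_univ, if_true]
      ring

private lemma span_le_rigT (W : Finset V) (F : Finset (Sym2 V))
    (hF : ∀ e ∈ F, ∀ x ∈ e, x ∈ W) :
    Submodule.span ℝ (rigRow d p '' ↑F) ≤ rigT d p W :=
  Submodule.span_le.2 (by rintro _ ⟨e, he, rfl⟩; exact rigRow_mem_rigT d p W e (hF e he))

private lemma sum_eq_pair_of_support {u w : V} (huw : u ≠ w) (f : V → ℝ)
    (h : ∀ x, x ≠ u → x ≠ w → f x = 0) : ∑ x, f x = f u + f w := by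
  rw [← Finset.sum_pair huw]
  refine (Finset.sum_subset (Finset.subset_univ _) ?_).symm
  intro x _ hx
  simp only [Finset.mem_insert, Finset.mem_singleton, not_or] at hx
  exact h x hx.1 hx.2

private lemma mem_inter_rigT (hd : 1 ≤ d) (u w : V) (huw : u ≠ w)
    (V1 V2 : Finset V) (hV12 : V1 ∩ V2 = {u, w})
    (hz : ∀ j, p u j ≠ p w j) {q : V × Fin d → ℝ}
    (h1 : q ∈ rigT d p V1) (h2 : q ∈ rigT d p V2) :
    ∃ c : ℝ, q = c • rigRow d p s(u, w) := by
  have hsupp : ∀ x, x ≠ u → x ≠ w → ∀ j, q (x, j) = 0 := by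
    intro x hxu hxw j
    by_cases hx1 : x ∈ V1
    · by_cases hx2 : x ∈ V2
      · exfalso
        have : x ∈ V1 ∩ V2 := Finset.mem_inter.2 ⟨hx1, hx2⟩
        rw [hV12] at this
        simp only [Finset.mem_insert, Finset.mem_singleton] at this
        tauto
      · exact h2.1 x hx2 j
    · exact h1.1 x hx1 j
  have htr : ∀ j, q (w, j) = - q (u, j) := by
    intro j
    have := h1.2.1 j
    rw [sum_eq_pair_of_support huw _ (fun x hxu hxw => hsupp x hxu hxw j)] at this
    linarith
  have hrot : ∀ j j', q (u, j) * (p u j' - p w j') = q (u, j') * (p u j - p w j) := by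
    intro j j'
    have := h1.2.2 j j'
    rw [sum_eq_pair_of_support huw _ (fun x hxu hxw => by rw [hsupp x hxu hxw j]; ring),
      sum_eq_pair_of_support huw _ (fun x hxu hxw => by rw [hsupp x hxu hxw j']; ring),
      htr j, htr j'] at this
    ring_nf at this ⊢
    linarith
  set j0 : Fin d := ⟨0, hd⟩
  have hz0 : p u j0 - p w j0 ≠ 0 := sub_ne_zero.2 (hz j0)
  refine ⟨q (u, j0) / (p u j0 - p w j0), ?_⟩
  have hu : ∀ j, q (u, j) = q (u, j0) / (p u j0 - p w j0) * (p u j - p w j) := by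
    intro j
    have := hrot j j0
    field_simp
    linarith
  funext xj
  obtain ⟨x, j⟩ := xj
  simp only [Pi.smul_apply, smul_eq_mul, rigRow_mk]
  by_cases hxu : x = u
  · subst hxu
    simp [huw, hu j]
  · by_cases hxw : x = w
    · have hwu : (w : V) ≠ u := Ne.symm huw
      rw [hxw, if_neg hwu, if_pos rfl, htr j, hu j]
      ring
    · rw [hsupp x hxu hxw j]
      simp [hxu, hxw]

private lemma rrk_le_card (F : Finset (Sym2 V)) : rrk d p ↑F ≤ F.card := by
  rw [rrk, ← Finset.coe_image]
  exact le_trans (finrank_span_finset_le_card _) Finset.card_image_le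

private lemma rig_span_eq (S T : Finset (Sym2 V)) (h : S ⊆ T)
    (hr : rrk d p ↑T ≤ rrk d p ↑S) :
    Submodule.span ℝ (rigRow d p '' ↑S) = Submodule.span ℝ (rigRow d p '' ↑T) :=
  Submodule.eq_of_le_of_finrank_le
    (Submodule.span_mono (Set.image_mono (Finset.coe_subset.2 h))) hr

private lemma rig_span_union (S T : Finset (Sym2 V)) :
    Submodule.span ℝ (rigRow d p '' ↑(S ∪ T)) =
      Submodule.span ℝ (rigRow d p '' ↑S) ⊔ Submodule.span ℝ (rigRow d p '' ↑T) := by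
  rw [Finset.coe_union, Set.image_union, Submodule.span_union]

private lemma rrk_union_formula (hd : 1 ≤ d) (u w : V) (huw : u ≠ w)
    (V1 V2 : Finset V) (hV12 : V1 ∩ V2 = {u, w}) (hz : ∀ j, p u j ≠ p w j)
    (F1 F2 : Finset (Sym2 V))
    (hF1 : ∀ e ∈ F1, ∀ x ∈ e, x ∈ V1) (hF2 : ∀ e ∈ F2, ∀ x ∈ e, x ∈ V2)
    (he1 : s(u, w) ∈ F1) (he2 : s(u, w) ∈ F2) :
    rrk d p ↑(F1 ∪ F2) + 1 = rrk d p ↑F1 + rrk d p ↑F2 := by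
  have hrow_ne : rigRow d p s(u, w) ≠ 0 := by
    intro h
    have h0 := congrFun h (u, ⟨0, hd⟩)
    rw [rigRow_mk] at h0
    simp only [if_pos rfl, if_neg huw, Pi.zero_apply] at h0
    norm_num at h0
    exact hz ⟨0, hd⟩ (sub_eq_zero.1 h0)
  have hinf : Submodule.span ℝ (rigRow d p '' ↑F1) ⊓ Submodule.span ℝ (rigRow d p '' ↑F2)
      = Submodule.span ℝ {rigRow d p s(u, w)} := by
    apply le_antisymm
    · intro q hq
      obtain ⟨hqA, hqB⟩ := Submodule.mem_inf.1 hq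
      obtain ⟨c, rfl⟩ := mem_inter_rigT d p hd u w huw V1 V2 hV12 hz
        (span_le_rigT d p V1 F1 hF1 hqA) (span_le_rigT d p V2 F2 hF2 hqB)
      exact Submodule.smul_mem _ c (Submodule.mem_span_singleton_self _)
    · rw [Submodule.span_le, Set.singleton_subset_iff]
      exact Submodule.mem_inf.2 ⟨Submodule.subset_span ⟨_, Finset.mem_coe.2 he1, rfl⟩,
        Submodule.subset_span ⟨_, Finset.mem_coe.2 he2, rfl⟩⟩
  have hdim := Submodule.finrank_sup_add_finrank_inf_eq
    (Submodule.span ℝ (rigRow d p '' (↑F1 : Set (Sym2 V))))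
    (Submodule.span ℝ (rigRow d p '' (↑F2 : Set (Sym2 V))))
  rw [hinf, finrank_span_singleton hrow_ne] at hdim
  simp only [rrk]
  rw [rig_span_union]
  exact hdim

end AuxRigidity

/-- Lemma 3.7: graphical parallel connections of `k`-fold `R_d`-circuits. -/
theorem graphical_parallel_connection_kfold (k : ℕ)
    (d : ℕ) (hd : 1 ≤ d) {V : Type*} [Fintype V] [DecidableEq V]
    (V1 V2 : Finset V) (E1 E2 : Finset (Sym2 V)) (u w : V) (huw : u ≠ w)
    (hV12 : V1 ∩ V2 = {u, w})
    (hE1 : ∀ e ∈ E1, ¬ e.IsDiag ∧ ∀ x ∈ e, x ∈ V1)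
    (hE2 : ∀ e ∈ E2, ¬ e.IsDiag ∧ ∀ x ∈ e, x ∈ V2)
    (hE12 : E1 ∩ E2 = {s(u, w)})
    (p : V → Fin d → ℝ) (hp : Generic d p)
    (hcoloop1 : rrk d p ↑(E1.erase (s(u, w))) = rrk d p ↑E1)
    (hcoloop2 : rrk d p ↑(E2.erase (s(u, w))) = rrk d p ↑E2) :
    IsKFoldCircuit d p (E1 ∪ E2) k ↔
      ∃ k1 k2 : ℕ, IsKFoldCircuit d p E1 k1 ∧ IsKFoldCircuit d p E2 k2 ∧
        k1 + k2 = k := by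
  classical
  have heE : s(u, w) ∈ E1 ∩ E2 := by rw [hE12]; exact Finset.mem_singleton_self _
  have heE1 : s(u, w) ∈ E1 := (Finset.mem_inter.1 heE).1
  have heE2 : s(u, w) ∈ E2 := (Finset.mem_inter.1 heE).2
  have hz : ∀ j, p u j ≠ p w j := by
    have hinj : Function.Injective fun vi : V × Fin d => p vi.1 vi.2 := hp.injective
    intro j h
    have h2 : ((u, j) : V × Fin d) = (w, j) := hinj h
    exact huw (congrArg Prod.fst h2)
  have hF1 : ∀ e ∈ E1, ∀ x ∈ e, x ∈ V1 := fun e he => (hE1 e he).2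
  have hF2 : ∀ e ∈ E2, ∀ x ∈ e, x ∈ V2 := fun e he => (hE2 e he).2
  have key : ∀ F1 F2 : Finset (Sym2 V), F1 ⊆ E1 → F2 ⊆ E2 → s(u, w) ∈ F1 → s(u, w) ∈ F2 →
      rrk d p ↑(F1 ∪ F2) + 1 = rrk d p ↑F1 + rrk d p ↑F2 :=
    fun F1 F2 h1 h2 he1 he2 => rrk_union_formula d p hd u w huw V1 V2 hV12 hz F1 F2
      (fun e he => hF1 e (h1 he)) (fun e he => hF2 e (h2 he)) he1 he2
  have hR : rrk d p ↑(E1 ∪ E2) + 1 = rrk d p ↑E1 + rrk d p ↑E2 :=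
    key E1 E2 (Finset.Subset.refl _) (Finset.Subset.refl _) heE1 heE2
  have hcard : (E1 ∪ E2).card + 1 = E1.card + E2.card := by
    have := Finset.card_union_add_card_inter E1 E2
    rw [hE12, Finset.card_singleton] at this
    omega
  have hr1le := rrk_le_card d p E1
  have hr2le := rrk_le_card d p E2
  constructor
  · rintro ⟨hDdel, hDcard⟩
    have hdel1 : ∀ f ∈ E1, rrk d p (↑E1 \ {f}) = rrk d p ↑E1 := by
      intro f hf
      by_cases hfe : f = s(u, w)
      · subst hfe
        rw [← Finset.coe_erase]
        exact hcoloop1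
      · have hfE2 : f ∉ E2 := fun h => hfe (by
          have : f ∈ E1 ∩ E2 := Finset.mem_inter.2 ⟨hf, h⟩
          rwa [hE12, Finset.mem_singleton] at this)
        have hDf := hDdel f (Finset.mem_union_left _ hf)
        have herase : (E1 ∪ E2).erase f = E1.erase f ∪ E2 := by
          rw [Finset.erase_union_distrib, Finset.erase_eq_of_notMem hfE2]
        have h1 : rrk d p ↑(E1.erase f ∪ E2) = rrk d p ↑(E1 ∪ E2) := by
          rw [← herase, Finset.coe_erase]
          exact hDf
        have h2 := key (E1.erase f) E2 (Finset.erase_subset _ _) (Finset.Subset.refl _)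
          (Finset.mem_erase.2 ⟨fun h => hfe h.symm, heE1⟩) heE2
        rw [← Finset.coe_erase]
        omega
    have hdel2 : ∀ f ∈ E2, rrk d p (↑E2 \ {f}) = rrk d p ↑E2 := by
      intro f hf
      by_cases hfe : f = s(u, w)
      · subst hfe
        rw [← Finset.coe_erase]
        exact hcoloop2
      · have hfE1 : f ∉ E1 := fun h => hfe (by
          have : f ∈ E1 ∩ E2 := Finset.mem_inter.2 ⟨h, hf⟩
          rwa [hE12, Finset.mem_singleton] at this)
        have hDf := hDdel f (Finset.mem_union_right _ hf)
        have herase : (E1 ∪ E2).erase f = E1 ∪ E2.erase f := by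
          rw [Finset.erase_union_distrib, Finset.erase_eq_of_notMem hfE1]
        have h1 : rrk d p ↑(E1 ∪ E2.erase f) = rrk d p ↑(E1 ∪ E2) := by
          rw [← herase, Finset.coe_erase]
          exact hDf
        have h2 := key E1 (E2.erase f) (Finset.Subset.refl _) (Finset.erase_subset _ _)
          heE1 (Finset.mem_erase.2 ⟨fun h => hfe h.symm, heE2⟩)
        rw [← Finset.coe_erase]
        omega
    exact ⟨E1.card - rrk d p ↑E1, E2.card - rrk d p ↑E2,
      ⟨hdel1, by omega⟩, ⟨hdel2, by omega⟩, by omega⟩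
  · rintro ⟨k1, k2, ⟨h1del, h1card⟩, ⟨h2del, h2card⟩, hk⟩
    constructor
    · intro f hf
      rw [← Finset.coe_erase]
      by_cases hfe : f = s(u, w)
      · subst hfe
        have hs1 : Submodule.span ℝ (rigRow d p '' ↑(E1.erase (s(u, w)))) =
            Submodule.span ℝ (rigRow d p '' ↑E1) :=
          rig_span_eq d p _ _ (Finset.erase_subset _ _) hcoloop1.ge
        have hs2 : Submodule.span ℝ (rigRow d p '' ↑(E2.erase (s(u, w)))) =
            Submodule.span ℝ (rigRow d p '' ↑E2) :=
          rig_span_eq d p _ _ (Finset.erase_subset _ _) hcoloop2.ge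
        have herase : (E1 ∪ E2).erase (s(u, w)) = E1.erase (s(u, w)) ∪ E2.erase (s(u, w)) :=
          Finset.erase_union_distrib _ _ _
        rw [herase]
        simp only [rrk]
        rw [rig_span_union, rig_span_union, hs1, hs2]
      · rcases Finset.mem_union.1 hf with hf1 | hf2
        · have hfE2 : f ∉ E2 := fun h => hfe (by
            have : f ∈ E1 ∩ E2 := Finset.mem_inter.2 ⟨hf1, h⟩
            rwa [hE12, Finset.mem_singleton] at this)
          have hs1 : Submodule.span ℝ (rigRow d p '' ↑(E1.erase f)) =
              Submodule.span ℝ (rigRow d p '' ↑E1) := by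
            refine rig_span_eq d p _ _ (Finset.erase_subset _ _) ?_
            rw [Finset.coe_erase]
            exact (h1del f hf1).ge
          have herase : (E1 ∪ E2).erase f = E1.erase f ∪ E2 := by
            rw [Finset.erase_union_distrib, Finset.erase_eq_of_notMem hfE2]
          rw [herase]
          simp only [rrk]
          rw [rig_span_union, rig_span_union, hs1]
        · have hfE1 : f ∉ E1 := fun h => hfe (by
            have : f ∈ E1 ∩ E2 := Finset.mem_inter.2 ⟨h, hf2⟩
            rwa [hE12, Finset.mem_singleton] at this)
          have hs2 : Submodule.span ℝ (rigRow d p '' ↑(E2.erase f)) =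
              Submodule.span ℝ (rigRow d p '' ↑E2) := by
            refine rig_span_eq d p _ _ (Finset.erase_subset _ _) ?_
            rw [Finset.coe_erase]
            exact (h2del f hf2).ge
          have herase : (E1 ∪ E2).erase f = E1 ∪ E2.erase f := by
            rw [Finset.erase_union_distrib, Finset.erase_eq_of_notMem hfE1]
          rw [herase]
          simp only [rrk]
          rw [rig_span_union, rig_span_union, hs2]
    · omega
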